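/- arXiv:2412.17435 — 2 statements merged into one kernel-verified Lean document; each statement's English description precedes it below -/
import Mathlib

section
/- (Nonlocality with PI, witness direction) Suppose η̃_μ ρ̃_μ − η̃_ω ρ̃_ω ∈ SEP* for all ω ∈ Ω_S, and for some ω• the operator η̃_μ ρ̃_μ − η̃_{ω•} ρ̃_{ω•} is an entanglement witness (in SEP* but not PSD). Then there exists a POVM achieving averaged success probability strictly greater than η̃_μ, hence p_SEP^PI(E,S) = 2η̃_μ < p_G^PI(E,S). -/
open Matrix
open scoped ComplexOrder

/-- Hermitian operators on the bipartite space `ℂ^dA ⊗ ℂ^dB`, modeled as matrices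
indexed by `Fin dA × Fin dB`. -/
abbrev Mat (dA dB : ℕ) := Matrix (Fin dA × Fin dB) (Fin dA × Fin dB) ℂ

/-- A bipartite operator is separable if it is a finite sum of Kronecker products of
positive-semidefinite operators on the two factors. -/
def IsSep {dA dB : ℕ} (E : Mat dA dB) : Prop :=
  ∃ (n : ℕ) (A : Fin n → Matrix (Fin dA) (Fin dA) ℂ)
    (B : Fin n → Matrix (Fin dB) (Fin dB) ℂ),
    (∀ l, (A l).PosSemidef) ∧ (∀ l, (B l).PosSemidef) ∧
      E = ∑ l, Matrix.kroneckerMap (· * ·) (A l) (B l)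

/-- Membership in the dual cone `SEP*` (block positivity): Hermitian with
`Tr(E F) ≥ 0` for every separable `F`. -/
def InSEPdual {dA dB : ℕ} (E : Mat dA dB) : Prop :=
  E.IsHermitian ∧ ∀ F : Mat dA dB, IsSep F → 0 ≤ (E * F).trace

/-!
For a separable measurement `M`, each term `η̃_ω Tr(ρ̃_ω M_ω)` is at most `η̃_μ Tr(ρ̃_μ M_ω)`,
because `η̃_μ ρ̃_μ - η̃_ω ρ̃_ω ∈ SEP*` and `M_ω` is separable; summing over `ω` and using
`∑ M_ω = 1` bounds the success probability by `η̃_μ`. Without the separability constraint,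
the witness `W = η̃_μ ρ̃_μ - η̃_{ω•} ρ̃_{ω•}` has a unit eigenvector `u` with negative eigenvalue,
and the two-outcome measurement `{1 - |u⟩⟨u|, |u⟩⟨u|}`, answering `μ` and `ω•` respectively,
succeeds with probability `η̃_μ - ⟨u|W|u⟩ > η̃_μ`.
-/

namespace Matrix

variable {n 𝕜 : Type*} [Fintype n] [DecidableEq n] [RCLike 𝕜]

lemma posSemidef_one_sub_vecMulVec {v : n → 𝕜} (hv : star v ⬝ᵥ v = 1) :
    (1 - vecMulVec v (star v)).PosSemidef := by
  set P := vecMulVec v (star v)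
  have hP : Pᴴ = P := (posSemidef_vecMulVec_self_star v).isHermitian
  have hPP : P * P = P := by rw [vecMulVec_mul_vecMulVec, hv, one_smul]
  have hsq : (1 - P)ᴴ * (1 - P) = 1 - P := by
    rw [conjTranspose_sub, conjTranspose_one, hP, sub_mul, mul_sub, mul_sub, hPP]
    simp
  exact hsq ▸ posSemidef_conjTranspose_mul_self (1 - P)

lemma IsHermitian.exists_re_trace_mul_neg {W : Matrix n n 𝕜} (hW : W.IsHermitian)
    (hW' : ¬W.PosSemidef) :
    ∃ P : Matrix n n 𝕜, P.PosSemidef ∧ (1 - P).PosSemidef ∧ RCLike.re (W * P).trace < 0 := by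
  obtain ⟨i, hi⟩ : ∃ i, hW.eigenvalues i < 0 := by
    simpa [hW.posSemidef_iff_eigenvalues_nonneg, Pi.le_def] using hW'
  set v : n → 𝕜 := WithLp.ofLp (hW.eigenvectorBasis i)
  have hv : star v ⬝ᵥ v = 1 := by
    have := inner_self_eq_norm_sq_to_K (𝕜 := 𝕜) (hW.eigenvectorBasis i)
    rw [hW.eigenvectorBasis.orthonormal.1 i, EuclideanSpace.inner_eq_star_dotProduct] at this
    simpa [dotProduct_comm] using this
  refine ⟨vecMulVec v (star v), posSemidef_vecMulVec_self_star v,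
    posSemidef_one_sub_vecMulVec hv, ?_⟩
  rw [mul_vecMulVec, trace_vecMulVec, hW.mulVec_eigenvectorBasis, dotProduct_comm,
    dotProduct_smul, hv]
  simpa [RCLike.smul_re] using hi

end Matrix

section Discrimination

variable {ι n : Type*} [Fintype ι] [Fintype n]

lemma trace_inv_smul_add_smul {a b : ℝ} (hab : a + b ≠ 0) {A B : Matrix n n ℂ}
    (hA : A.trace = 1) (hB : B.trace = 1) :
    ((((a + b : ℝ) : ℂ))⁻¹ • ((a : ℂ) • A + (b : ℂ) • B)).trace = 1 := by
  simp only [trace_smul, trace_add, hA, hB, smul_eq_mul, mul_one]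
  push_cast
  exact inv_mul_cancel₀ (by exact_mod_cast hab)

lemma re_trace_smul_sub_smul_mul (a b : ℝ) (A B X : Matrix n n ℂ) :
    ((((a : ℂ) • A - (b : ℂ) • B) * X).trace).re = a * (A * X).trace.re - b * (B * X).trace.re := by
  simp [sub_mul, trace_sub]

variable [DecidableEq n]

theorem sum_mul_re_trace_le_of_forall_nonneg {η : ι → ℝ} {ρ M : ι → Matrix n n ℂ} {μ : ι}
    (htr : (ρ μ).trace = 1) (hM : ∑ ω, M ω = 1)
    (hdom : ∀ ω, 0 ≤ (((η μ : ℂ) • ρ μ - (η ω : ℂ) • ρ ω) * M ω).trace) :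
    ∑ ω, η ω * (ρ ω * M ω).trace.re ≤ η μ := by
  have hterm (ω : ι) : η ω * (ρ ω * M ω).trace.re ≤ η μ * (ρ μ * M ω).trace.re := by
    have := (Complex.le_def.mp (hdom ω)).1
    rw [Complex.zero_re, re_trace_smul_sub_smul_mul] at this
    linarith
  calc ∑ ω, η ω * (ρ ω * M ω).trace.re
      ≤ ∑ ω, η μ * (ρ μ * M ω).trace.re := Finset.sum_le_sum fun ω _ => hterm ω
    _ = η μ := by
      rw [← Finset.mul_sum, ← Complex.re_sum, ← trace_sum, ← Finset.mul_sum, hM, mul_one, htr,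
        Complex.one_re, mul_one]

variable [DecidableEq ι]

theorem exists_povm_lt_sum_mul_re_trace_of_not_posSemidef {η : ι → ℝ} {ρ : ι → Matrix n n ℂ}
    {μ ν : ι} (htr : (ρ μ).trace = 1)
    (hW : ((η μ : ℂ) • ρ μ - (η ν : ℂ) • ρ ν).IsHermitian)
    (hW' : ¬((η μ : ℂ) • ρ μ - (η ν : ℂ) • ρ ν).PosSemidef) :
    ∃ M : ι → Matrix n n ℂ, (∀ ω, (M ω).PosSemidef) ∧ ∑ ω, M ω = 1 ∧
      η μ < ∑ ω, η ω * (ρ ω * M ω).trace.re := by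
  have hμν : μ ≠ ν := by
    rintro rfl
    exact hW' (by simpa using PosSemidef.zero)
  obtain ⟨P, hP, hP', hWP⟩ := hW.exists_re_trace_mul_neg hW'
  let M : ι → Matrix n n ℂ := fun ω => if ω = μ then 1 - P else if ω = ν then P else 0
  have hM₀ : ∀ ω, ω ≠ μ ∧ ω ≠ ν → M ω = 0 := fun ω h => by simp [M, h.1, h.2]
  have hMμ : M μ = 1 - P := if_pos rfl
  have hMν : M ν = P := by simp [M, hμν.symm]
  refine ⟨M, fun ω => ?_, ?_, ?_⟩
  · dsimp only [M]
    split_ifs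
    exacts [hP', hP, PosSemidef.zero]
  · rw [Fintype.sum_eq_add μ ν hμν hM₀, hMμ, hMν, sub_add_cancel]
  · rw [Fintype.sum_eq_add μ ν hμν (fun ω h => by simp [hM₀ ω h]), hMμ, hMν]
    rw [RCLike.re_to_complex, re_trace_smul_sub_smul_mul] at hWP
    have hμ : (ρ μ * (1 - P)).trace.re = 1 - (ρ μ * P).trace.re := by
      simp [mul_sub, trace_sub, htr]
    rw [hμ]
    linarith

end Discrimination

theorem pi_nonlocality_witness_general {dA dB : ℕ}
    (η : Fin 4 → ℝ) (ρ : Fin 4 → Mat dA dB)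
    (hη : ∀ i, 0 < η i)
    (hρ : ∀ i, (ρ i).PosSemidef ∧ (ρ i).trace = 1)
    (s c : Fin 2 → Fin 4)
    (ηt : Fin 2 × Fin 2 → ℝ) (ρt : Fin 2 × Fin 2 → Mat dA dB)
    (hρt : ∀ ω, ρt ω = (((η (s ω.1) + η (c ω.2) : ℝ) : ℂ))⁻¹ •
        ((η (s ω.1) : ℂ) • ρ (s ω.1) + (η (c ω.2) : ℂ) • ρ (c ω.2)))
    (μ : Fin 2 × Fin 2)
    (hdual : ∀ ω, InSEPdual ((ηt μ : ℂ) • ρt μ - (ηt ω : ℂ) • ρt ω))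
    (ωb : Fin 2 × Fin 2)
    (hEW : InSEPdual ((ηt μ : ℂ) • ρt μ - (ηt ωb : ℂ) • ρt ωb) ∧
      ¬ ((ηt μ : ℂ) • ρt μ - (ηt ωb : ℂ) • ρt ωb).PosSemidef) :
    (∃ M : Fin 2 × Fin 2 → Mat dA dB, (∀ ω, (M ω).PosSemidef) ∧ ∑ ω, M ω = 1 ∧
        ηt μ < ∑ ω, ηt ω * ((ρt ω * M ω).trace).re) ∧
    (∀ M : Fin 2 × Fin 2 → Mat dA dB, (∀ ω, IsSep (M ω)) → ∑ ω, M ω = 1 →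
        ∑ ω, ηt ω * ((ρt ω * M ω).trace).re ≤ ηt μ) := by
  have htr : (ρt μ).trace = 1 := by
    rw [hρt μ]
    exact trace_inv_smul_add_smul (add_pos (hη _) (hη _)).ne' (hρ _).2 (hρ _).2
  refine ⟨exists_povm_lt_sum_mul_re_trace_of_not_posSemidef htr hEW.1.1 hEW.2,
    fun M hsep hM =>
      sum_mul_re_trace_le_of_forall_nonneg htr hM fun ω => (hdual ω).2 (M ω) (hsep ω)⟩

theorem pi_nonlocality_witness {dA dB : ℕ}
    (η : Fin 4 → ℝ) (ρ : Fin 4 → Mat dA dB)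
    (hη : ∀ i, 0 < η i) (hsum : ∑ i, η i = 1)
    (hρ : ∀ i, (ρ i).PosSemidef ∧ (ρ i).trace = 1)
    (s c : Fin 2 → Fin 4) (hbij : Function.Bijective (Sum.elim s c))
    (ηt : Fin 2 × Fin 2 → ℝ) (ρt : Fin 2 × Fin 2 → Mat dA dB)
    (hηt : ∀ ω, ηt ω = (η (s ω.1) + η (c ω.2)) / 2)
    (hρt : ∀ ω, ρt ω = (((η (s ω.1) + η (c ω.2) : ℝ) : ℂ))⁻¹ •
        ((η (s ω.1) : ℂ) • ρ (s ω.1) + (η (c ω.2) : ℂ) • ρ (c ω.2)))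
    (μ : Fin 2 × Fin 2)
    (hdual : ∀ ω, InSEPdual ((ηt μ : ℂ) • ρt μ - (ηt ω : ℂ) • ρt ω))
    (ωb : Fin 2 × Fin 2)
    (hEW : InSEPdual ((ηt μ : ℂ) • ρt μ - (ηt ωb : ℂ) • ρt ωb) ∧
      ¬ ((ηt μ : ℂ) • ρt μ - (ηt ωb : ℂ) • ρt ωb).PosSemidef) :
    (∃ M : Fin 2 × Fin 2 → Mat dA dB, (∀ ω, (M ω).PosSemidef) ∧ ∑ ω, M ω = 1 ∧
        ηt μ < ∑ ω, ηt ω * ((ρt ω * M ω).trace).re) ∧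
    (∀ M : Fin 2 × Fin 2 → Mat dA dB, (∀ ω, IsSep (M ω)) → ∑ ω, M ω = 1 →
        ∑ ω, ηt ω * ((ρt ω * M ω).trace).re ≤ ηt μ) :=
  pi_nonlocality_witness_general η ρ hη hρ s c ηt ρt hρt μ hdual ωb hEW
end

section
/- (Theorem 3, cone computations) Let Λ = {1,2,3,4} and suppose η₁ρ₁ − η₂ρ₂ ∈ ℍ₊, η₁ρ₁ − η₃ρ₃ ∈ SEP*\ℍ₊, η₂ρ₂ − η₄ρ₄ ∈ SEP*, η₃ρ₃ − η₄ρ₄ ∈ ℍ₊. Then: (a) η₁ρ₁ − η₄ρ₄ ∈ SEP*; (b) for S = {1,2} and μ = (1,3), η̃_μρ̃_μ − η̃_ωρ̃_ω ∈ ℍ₊ for all ω ∈ S × S^c; (c) for S = {1,3} and μ = (1,2), η̃_μρ̃_μ − η̃_ωρ̃_ω ∈ SEP* for all ω ∈ S × S^c, and η̃_μρ̃_μ − η̃_(3,2)ρ̃_(3,2) ∉ ℍ₊. -/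
/-!
`SEP*` is a convex cone containing the PSD cone, because the trace pairing of two PSD matrices is
nonnegative and Kronecker products of PSD matrices are PSD. Every claimed membership is then a
nonnegative combination of the hypotheses: `λ₁ - λ₄ = (λ₁ - λ₃) + (λ₃ - λ₄)`, and
`T (x, y) (a, b) = ½ ((λ_x - λ_a) + (λ_y - λ_b))`, where each bracket is `0` or a hypothesis.
Finally `T (1, 2) (3, 2) = ½ (λ₁ - λ₃)`, which is not PSD because `λ₁ - λ₃` is not.
(Indices as in the paper; in Lean `λ₁` is `lam 0`.)
-/

open Matrix
open scoped ComplexOrder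

lemma Matrix.PosSemidef.trace_mul_nonneg {n 𝕜 : Type*} [Fintype n] [DecidableEq n] [RCLike 𝕜]
    {E F : Matrix n n 𝕜} (hE : E.PosSemidef) (hF : F.PosSemidef) : 0 ≤ (E * F).trace := by
  obtain ⟨B, rfl⟩ : ∃ B : Matrix n n 𝕜, F = star B * B := by
    open scoped MatrixOrder in exact CStarAlgebra.nonneg_iff_eq_star_mul_self.mp hF.nonneg
  rw [star_eq_conjTranspose, ← Matrix.mul_assoc, trace_mul_cycle]
  exact (hE.mul_mul_conjTranspose_same B).trace_nonneg

section SEPdual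

variable {dA dB : ℕ} {E F : Mat dA dB}

lemma Matrix.PosSemidef.inSEPdual (h : E.PosSemidef) : InSEPdual E := by
  refine ⟨h.1, ?_⟩
  rintro F ⟨n, A, B, hA, hB, rfl⟩
  rw [Matrix.mul_sum, Matrix.trace_sum]
  exact Finset.sum_nonneg fun l _ => h.trace_mul_nonneg ((hA l).kronecker (hB l))

lemma InSEPdual.add (hE : InSEPdual E) (hF : InSEPdual F) : InSEPdual (E + F) :=
  ⟨hE.1.add hF.1, fun G hG => by
    rw [Matrix.add_mul, Matrix.trace_add]
    exact add_nonneg (hE.2 G hG) (hF.2 G hG)⟩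

lemma InSEPdual.smul (h : InSEPdual E) {c : ℂ} (hc : 0 ≤ c) : InSEPdual (c • E) :=
  ⟨IsSelfAdjoint.smul (.of_nonneg hc) h.1, fun F hF => by
    rw [Matrix.smul_mul, Matrix.trace_smul, smul_eq_mul]
    exact mul_nonneg hc (h.2 F hF)⟩

end SEPdual

theorem thm3_cone_computations_general {dA dB : ℕ}
    (lam : Fin 4 → Mat dA dB)
    (T : Fin 4 × Fin 4 → Fin 4 × Fin 4 → Mat dA dB)
    (hT : ∀ p q, T p q = (2 : ℂ)⁻¹ • (lam p.1 + lam p.2 - lam q.1 - lam q.2))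
    (h12 : (lam 0 - lam 1).PosSemidef)
    (h13 : InSEPdual (lam 0 - lam 2) ∧ ¬ (lam 0 - lam 2).PosSemidef)
    (h24 : InSEPdual (lam 1 - lam 3))
    (h34 : (lam 2 - lam 3).PosSemidef) :
    InSEPdual (lam 0 - lam 3) ∧
    (∀ a ∈ ({0, 1} : Finset (Fin 4)), ∀ b ∈ ({2, 3} : Finset (Fin 4)),
        (T (0, 2) (a, b)).PosSemidef) ∧
    (∀ a ∈ ({0, 2} : Finset (Fin 4)), ∀ b ∈ ({1, 3} : Finset (Fin 4)),
        InSEPdual (T (0, 1) (a, b))) ∧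
    ¬ (T (0, 1) (2, 1)).PosSemidef := by
  have hT' : ∀ x y a b, T (x, y) (a, b) = (2 : ℂ)⁻¹ • ((lam x - lam a) + (lam y - lam b)) :=
    fun x y a b => by rw [hT]; congr 1; abel
  have half_nonneg : (0 : ℂ) ≤ 2⁻¹ := inv_nonneg.mpr zero_le_two
  have h0_psd : ∀ a ∈ ({0, 1} : Finset (Fin 4)), (lam 0 - lam a).PosSemidef := by
    simp [h12, PosSemidef.zero]
  have h2_psd : ∀ b ∈ ({2, 3} : Finset (Fin 4)), (lam 2 - lam b).PosSemidef := by
    simp [h34, PosSemidef.zero]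
  have h0_sep : ∀ a ∈ ({0, 2} : Finset (Fin 4)), InSEPdual (lam 0 - lam a) := by
    simp [h13.1, PosSemidef.zero.inSEPdual]
  have h1_sep : ∀ b ∈ ({1, 3} : Finset (Fin 4)), InSEPdual (lam 1 - lam b) := by
    simp [h24, PosSemidef.zero.inSEPdual]
  refine ⟨sub_add_sub_cancel (lam 0) (lam 2) (lam 3) ▸ h13.1.add h34.inSEPdual,
    fun a ha b hb => ?_, fun a ha b hb => ?_, fun h => h13.2 ?_⟩
  · rw [hT']
    exact ((h0_psd a ha).add (h2_psd b hb)).smul half_nonneg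
  · rw [hT']
    exact ((h0_sep a ha).add (h1_sep b hb)).smul half_nonneg
  · have h2 := h.smul (zero_le_two : (0 : ℂ) ≤ 2)
    rwa [hT', sub_self, add_zero, smul_smul, mul_inv_cancel₀ two_ne_zero, one_smul] at h2

theorem thm3_cone_computations {dA dB : ℕ}
    (η : Fin 4 → ℝ) (ρ : Fin 4 → Mat dA dB)
    (hη : ∀ i, 0 < η i) (hsum : ∑ i, η i = 1)
    (hρ : ∀ i, (ρ i).PosSemidef ∧ (ρ i).trace = 1)
    (lam : Fin 4 → Mat dA dB) (hlam : ∀ i, lam i = (η i : ℂ) • ρ i)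
    (T : Fin 4 × Fin 4 → Fin 4 × Fin 4 → Mat dA dB)
    (hT : ∀ p q, T p q = (2 : ℂ)⁻¹ • (lam p.1 + lam p.2 - lam q.1 - lam q.2))
    (h12 : (lam 0 - lam 1).PosSemidef)
    (h13 : InSEPdual (lam 0 - lam 2) ∧ ¬ (lam 0 - lam 2).PosSemidef)
    (h24 : InSEPdual (lam 1 - lam 3))
    (h34 : (lam 2 - lam 3).PosSemidef) :
    InSEPdual (lam 0 - lam 3) ∧
    (∀ a ∈ ({0, 1} : Finset (Fin 4)), ∀ b ∈ ({2, 3} : Finset (Fin 4)),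
        (T (0, 2) (a, b)).PosSemidef) ∧
    (∀ a ∈ ({0, 2} : Finset (Fin 4)), ∀ b ∈ ({1, 3} : Finset (Fin 4)),
        InSEPdual (T (0, 1) (a, b))) ∧
    ¬ (T (0, 1) (2, 1)).PosSemidef :=
  thm3_cone_computations_general lam T hT h12 h13 h24 h34
end
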